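/- Assume Re(ν) > 0 and let ψ: (0,∞) → V be continuous, satisfy the Lewis equation at every x > 0, and satisfy ψ(x) → 0 as x → ∞. Then ψ is an eigenfunction with eigenvalue 1 of the transfer operator at ∞, i.e. for every x > 0 one has ψ(x) = Σ_{n=1}^∞ (n+x)^{−2ν−1}·η(T'T^{n−1})^{−1}(ψ(1 − 1/(n+x))). -/

import Mathlib

/-!
Since `T⁻¹ S T⁻¹ = T'⁻¹`, the Lewis equation reads
`ψ(y) = η(T⁻¹) ψ(y + 1) + (y + 1)^(-2ν-1) η(T'⁻¹) ψ(y / (y + 1))`, and iterating it from `y = x`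
gives `ψ(x) = η(T⁻ᵏ) ψ(x + k) + (k-th partial sum of the transfer series)`. As `η(T)` has finite
order, the operators `η(T⁻ᵏ)` are uniformly bounded, so the remainder tends to `0` with `ψ` at
`∞`; the series converges absolutely because `Re(2ν + 1) > 1` and its arguments
`1 - 1/(n + 1 + x)` stay in the compact interval `[x/(x + 1), 1]`, where `ψ` is bounded.
-/

open Complex

/-- `SL₂(ℤ)`. -/
abbrev SL2Z := Matrix.SpecialLinearGroup (Fin 2) ℤ

/-- The matrix `T = [[1,1],[0,1]]`. -/
def Tm : SL2Z := ⟨!![1, 1; 0, 1], by norm_num [Matrix.det_fin_two_of]⟩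

/-- The matrix `S = [[0,1],[−1,0]]`. -/
def Sm : SL2Z := ⟨!![0, 1; -1, 0], by norm_num [Matrix.det_fin_two_of]⟩

/-- The matrix `T' = [[1,0],[1,1]]`. -/
def Tm' : SL2Z := ⟨!![1, 0; 1, 1], by norm_num [Matrix.det_fin_two_of]⟩

/-- The matrix `−I`. -/
def negI : SL2Z := ⟨!![-1, 0; 0, -1], by norm_num [Matrix.det_fin_two_of]⟩

/-- `ψ : (0,∞) → V` satisfies the Lewis equation with parameter `ν` at `x`. -/
def LewisEqR {V : Type*} [NormedAddCommGroup V] [NormedSpace ℂ V]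
    (η : SL2Z →* Module.End ℂ V) (ν : ℂ) (ψ : ℝ → V) (x : ℝ) : Prop :=
  η Tm (ψ x) =
    ψ (x + 1) +
      ((((x : ℂ) + 1)) ^ (-2 * ν - 1)) • η (Sm * Tm⁻¹) (ψ (x / (x + 1)))

open Filter Topology

theorem Module.End.exists_bound_of_finite_range {𝕜 E ι : Type*} [NontriviallyNormedField 𝕜]
    [CompleteSpace 𝕜] [NormedAddCommGroup E] [NormedSpace 𝕜 E] [FiniteDimensional 𝕜 E]
    {f : ι → Module.End 𝕜 E} (hf : (Set.range f).Finite) :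
    ∃ C, 0 ≤ C ∧ ∀ i v, ‖f i v‖ ≤ C * ‖v‖ := by
  obtain ⟨C, hC⟩ := (hf.image fun A => ‖LinearMap.toContinuousLinearMap A‖).bddAbove
  refine ⟨max C 0, le_max_right _ _, fun i v => ?_⟩
  calc ‖f i v‖ ≤ ‖LinearMap.toContinuousLinearMap (f i)‖ * ‖v‖ :=
        (LinearMap.toContinuousLinearMap (f i)).le_opNorm v
    _ ≤ max C 0 * ‖v‖ := by
      gcongr
      exact (hC ⟨f i, ⟨i, rfl⟩, rfl⟩).trans (le_max_left _ _)

theorem finite_range_pow_mul {M : Type*} [Monoid M] {a : M} (ha : IsOfFinOrder a) (b : M) :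
    (Set.range fun n : ℕ => a ^ n * b).Finite := by
  refine (ha.finite_powers.image (· * b)).subset ?_
  rintro _ ⟨n, rfl⟩
  exact ⟨a ^ n, ⟨n, rfl⟩, rfl⟩

theorem MonoidHom.isOfFinOrder_map_inv {G M : Type*} [Group G] [Monoid M] (f : G →* M) {g : G}
    (hg : IsOfFinOrder (f g)) : IsOfFinOrder (f g⁻¹) := by
  have h : IsOfFinOrder (f.toHomUnits g)⁻¹ := (Units.isOfFinOrder_val.mp hg).inv
  rw [← map_inv] at h
  exact Units.isOfFinOrder_val.mpr h

theorem summable_cpow_smul_of_norm_le {E : Type*} [NormedAddCommGroup E] [NormedSpace ℂ E]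
    [CompleteSpace E] {s : ℂ} (hs : s.re < -1) {x : ℝ} (hx : 0 ≤ x) {v : ℕ → E} {M : ℝ}
    (hv : ∀ n, ‖v n‖ ≤ M) :
    Summable fun n : ℕ => ((((n : ℝ) + 1 + x : ℝ) : ℂ) ^ s) • v n := by
  have hM : 0 ≤ M := (norm_nonneg _).trans (hv 0)
  have hmaj : Summable fun n : ℕ => M * ((n : ℝ) + 1) ^ s.re := by
    refine Summable.mul_left M ?_
    simpa using (summable_nat_add_iff 1).mpr (Real.summable_nat_rpow.mpr hs)
  refine Summable.of_norm_bounded hmaj fun n => ?_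
  rw [norm_smul, Complex.norm_cpow_eq_rpow_re_of_pos (by positivity), mul_comm]
  exact mul_le_mul (hv n) (Real.rpow_le_rpow_of_nonpos (by positivity) (by linarith) (by linarith))
    (by positivity) hM

theorem one_sub_one_div_add_mem_Icc {x : ℝ} (hx : 0 ≤ x) (n : ℕ) :
    1 - 1 / ((n : ℝ) + 1 + x) ∈ Set.Icc (x / (x + 1)) 1 := by
  constructor
  · calc x / (x + 1) = 1 - 1 / (x + 1) := by field_simp; ring
      _ ≤ 1 - 1 / ((n : ℝ) + 1 + x) :=
        sub_le_sub_left (one_div_le_one_div_of_le (by positivity) (by linarith)) 1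
  · have : 0 ≤ 1 / ((n : ℝ) + 1 + x) := by positivity
    linarith

theorem Tm_inv_mul_Sm_mul_Tm_inv : Tm⁻¹ * Sm * Tm⁻¹ = Tm'⁻¹ := by
  ext i j
  fin_cases i <;> fin_cases j <;> decide

section Lewis

variable {V : Type*} [NormedAddCommGroup V] [NormedSpace ℂ V]
  {η : SL2Z →* Module.End ℂ V} {ν : ℂ} {ψ : ℝ → V}

variable (η ν ψ) in
/-- The paper's term of index `n + 1` of the transfer operator at `∞` applied to `ψ` at `x`. -/
noncomputable def transferTermInfty (x : ℝ) (n : ℕ) : V :=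
  ((((n : ℝ) + 1 + x : ℝ) : ℂ) ^ (-2 * ν - 1)) •
    η ((Tm' * Tm ^ n)⁻¹) (ψ (1 - 1 / ((n : ℝ) + 1 + x)))

theorem LewisEqR.eq_add {y : ℝ} (h : LewisEqR η ν ψ y) :
    ψ y = η Tm⁻¹ (ψ (y + 1)) + (((y : ℂ) + 1) ^ (-2 * ν - 1)) • η Tm'⁻¹ (ψ (y / (y + 1))) := by
  have := congrArg (η Tm⁻¹) h
  rwa [← Module.End.mul_apply, ← map_mul, inv_mul_cancel, map_one, Module.End.one_apply, map_add,
    map_smul, ← Module.End.mul_apply, ← map_mul, ← mul_assoc, Tm_inv_mul_Sm_mul_Tm_inv] at this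

theorem LewisEqR.pow_apply_eq {x : ℝ} (hx : 0 ≤ x) {k : ℕ} (h : LewisEqR η ν ψ (x + k)) :
    η (Tm⁻¹ ^ k) (ψ (x + k)) =
      η (Tm⁻¹ ^ (k + 1)) (ψ (x + (k + 1 : ℕ))) + transferTermInfty η ν ψ x k := by
  rw [h.eq_add, map_add, map_smul, pow_succ, map_mul, Module.End.mul_apply,
    ← Module.End.mul_apply (η _) (η Tm'⁻¹), ← map_mul, transferTermInfty, mul_inv_rev,
    ← inv_pow]
  have hk : x + k + 1 ≠ 0 := by positivity
  congr 4
  · push_cast; ring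
  · push_cast; ring
  · field_simp; ring

theorem eq_pow_apply_add_sum_transferTermInfty {x : ℝ} (hx : 0 ≤ x)
    (h : ∀ k : ℕ, LewisEqR η ν ψ (x + k)) (k : ℕ) :
    ψ x = η (Tm⁻¹ ^ k) (ψ (x + k)) + ∑ n ∈ Finset.range k, transferTermInfty η ν ψ x n := by
  induction k with
  | zero => simp
  | succ k ih =>
    rw [ih, (h k).pow_apply_eq hx, Finset.sum_range_succ]
    abel

variable [FiniteDimensional ℂ V] (hT : IsOfFinOrder (η Tm⁻¹))
include hT

theorem summable_transferTermInfty (hν : 0 < ν.re) (hψ : ContinuousOn ψ (Set.Ioi 0)) {x : ℝ}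
    (hx : 0 < x) : Summable (transferTermInfty η ν ψ x) := by
  have : CompleteSpace V := FiniteDimensional.complete ℂ V
  obtain ⟨C, hC_nonneg, hC⟩ :=
    Module.End.exists_bound_of_finite_range (finite_range_pow_mul hT (η Tm'⁻¹))
  obtain ⟨M, hM⟩ : ∃ M, ∀ y ∈ Set.Icc (x / (x + 1)) 1, ‖ψ y‖ ≤ M :=
    isCompact_Icc.exists_bound_of_continuousOn <| hψ.mono fun y hy =>
      lt_of_lt_of_le (by positivity) hy.1
  refine summable_cpow_smul_of_norm_le (by simp; linarith) hx.le (M := C * M) fun n => ?_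
  rw [mul_inv_rev, ← inv_pow, map_mul, map_pow]
  exact (hC n _).trans
    (mul_le_mul_of_nonneg_left (hM _ (one_sub_one_div_add_mem_Icc hx.le n)) hC_nonneg)

theorem tendsto_Tm_inv_pow_apply_add_natCast (hψ : Tendsto ψ atTop (𝓝 0)) (x : ℝ) :
    Tendsto (fun k : ℕ => η (Tm⁻¹ ^ k) (ψ (x + k))) atTop (𝓝 0) := by
  obtain ⟨C, -, hC⟩ := Module.End.exists_bound_of_finite_range (finite_range_pow_mul hT 1)
  refine squeeze_zero_norm (a := fun k : ℕ => C * ‖ψ (x + k)‖) (fun k => ?_) ?_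
  · simpa only [map_pow, mul_one] using hC k (ψ (x + k))
  · have hshift := hψ.comp (tendsto_atTop_add_const_left _ x tendsto_natCast_atTop_atTop)
    simpa using hshift.norm.const_mul C

theorem hasSum_transferTermInfty (hν : 0 < ν.re) (hcont : ContinuousOn ψ (Set.Ioi 0))
    (hlewis : ∀ y : ℝ, 0 < y → LewisEqR η ν ψ y) (hinf : Tendsto ψ atTop (𝓝 0)) {x : ℝ}
    (hx : 0 < x) : HasSum (transferTermInfty η ν ψ x) (ψ x) := by
  refine (summable_transferTermInfty hT hν hcont hx).hasSum_iff_tendsto_nat.mpr ?_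
  have hdiff : Tendsto (fun k : ℕ => ψ x - η (Tm⁻¹ ^ k) (ψ (x + k))) atTop (𝓝 (ψ x)) := by
    simpa using tendsto_const_nhds.sub (tendsto_Tm_inv_pow_apply_add_natCast hT hinf x)
  refine hdiff.congr fun k => ?_
  rw [eq_pow_apply_add_sum_transferTermInfty hx.le (fun k => hlewis _ (by positivity)) k,
    add_sub_cancel_left]

end Lewis

theorem stmt14_general {V : Type*} [NormedAddCommGroup V] [NormedSpace ℂ V]
    [FiniteDimensional ℂ V]
    (η : SL2Z →* Module.End ℂ V)
    (N : ℕ) (hN : 0 < N) (hord : η Tm ^ N = 1)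
    (ν : ℂ) (hν : 0 < ν.re)
    (ψ : ℝ → V) (hψcont : ContinuousOn ψ (Set.Ioi (0 : ℝ)))
    (hψlewis : ∀ x : ℝ, 0 < x → LewisEqR η ν ψ x)
    (hψinf : Filter.Tendsto ψ Filter.atTop (nhds 0)) :
    ∀ x : ℝ, 0 < x →
      ψ x = ∑' n : ℕ, (((((n : ℝ) + 1 + x : ℝ) : ℂ)) ^ (-2 * ν - 1)) •
          η ((Tm' * Tm ^ n)⁻¹) (ψ (1 - 1 / ((n : ℝ) + 1 + x))) := by
  intro x hx
  have hT : IsOfFinOrder (η Tm⁻¹) :=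
    η.isOfFinOrder_map_inv (isOfFinOrder_iff_pow_eq_one.mpr ⟨N, hN, hord⟩)
  exact (hasSum_transferTermInfty hT hν hψcont hψlewis hψinf hx).tsum_eq.symm

/-- If `Re(ν) > 0`, `ψ` is continuous on `(0,∞)`, satisfies the Lewis equation
there, and `ψ(x) → 0` as `x → ∞`, then `ψ` is an eigenfunction with eigenvalue
`1` of the transfer operator at `∞`. -/
theorem stmt14 {V : Type*} [NormedAddCommGroup V] [NormedSpace ℂ V]
    [FiniteDimensional ℂ V] [Nontrivial V]
    (η : SL2Z →* Module.End ℂ V) (hη : η negI = 1)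
    (N : ℕ) (hN : 0 < N) (hord : η Tm ^ N = 1)
    (ν : ℂ) (hν : 0 < ν.re)
    (ψ : ℝ → V) (hψcont : ContinuousOn ψ (Set.Ioi (0 : ℝ)))
    (hψlewis : ∀ x : ℝ, 0 < x → LewisEqR η ν ψ x)
    (hψinf : Filter.Tendsto ψ Filter.atTop (nhds 0)) :
    ∀ x : ℝ, 0 < x →
      ψ x = ∑' n : ℕ, (((((n : ℝ) + 1 + x : ℝ) : ℂ)) ^ (-2 * ν - 1)) •
          η ((Tm' * Tm ^ n)⁻¹) (ψ (1 - 1 / ((n : ℝ) + 1 + x))) :=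
  stmt14_general η N hN hord ν hν ψ hψcont hψlewis hψinf
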